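/- The charged Hawking mass of any spherically symmetric graph in Reissner–Nordström(-AdS) equals the mass parameter. Let n ≥ 3, M, Q ∈ ℝ, λ ≥ 0, V_RN(r) = 1 − 2M/r^{n−2} + Q²/r^{2(n−2)} + λ·r², let I ⊂ (0,∞) be an interval with V_RN > 0, and let f : I → ℝ be differentiable with |V_RN·f′| < 1. With V_f = V_RN/(1 − (V_RN·f′)²), k_S = −(n−1)·V_RN·f′·√(V_f)/r, and charge q = Q, the charged Hawking mass satisfies m_CH(r) = (r^{n−2}/2)·[1 − V_f(r) + r²·k_S(r)²/(n−1)²] + λ·r^n/2 + Q²/(2·r^{n−2}) = M for every r ∈ I. -/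

import Mathlib

open Real Filter

/-- The Reissner–Nordström(-AdS) metric function
`V_RN(r) = 1 - 2M/r^{n-2} + Q²/r^{2(n-2)} + λ r²`. -/
noncomputable def VRN (n : ℕ) (M Q lam : ℝ) (r : ℝ) : ℝ :=
  1 - 2 * M / r ^ (n - 2) + Q ^ 2 / r ^ (2 * (n - 2)) + lam * r ^ 2

/-- Radial metric function induced on the graph `t = f(r)`:
`V_f = V_RN / (1 - (V_RN f')²)`. -/
noncomputable def Vgraph (n : ℕ) (M Q lam : ℝ) (f : ℝ → ℝ) (r : ℝ) : ℝ :=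
  VRN n M Q lam r / (1 - (VRN n M Q lam r * deriv f r) ^ 2)

/-- Spherical part of the extrinsic curvature of the graph:
`k_S = -(n-1) V_RN f' √(V_f)/r`. -/
noncomputable def kSgraph (n : ℕ) (M Q lam : ℝ) (f : ℝ → ℝ) (r : ℝ) : ℝ :=
  -(((n : ℝ) - 1) * VRN n M Q lam r * deriv f r * Real.sqrt (Vgraph n M Q lam f r)) / r

/-- Radial part of the extrinsic curvature of the graph: `k_I = (d/dr)[r k_S/(n-1)]`. -/
noncomputable def kIgraph (n : ℕ) (M Q lam : ℝ) (f : ℝ → ℝ) (r : ℝ) : ℝ :=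
  deriv (fun ρ => ρ * kSgraph n M Q lam f ρ / ((n : ℝ) - 1)) r

/-- Radial electric field on the graph: `E_I = √((n-1)(n-2)/2)·Q/(r^{n-1}√(V_f))`. -/
noncomputable def EIgraph (n : ℕ) (M Q lam : ℝ) (f : ℝ → ℝ) (r : ℝ) : ℝ :=
  Real.sqrt (((n : ℝ) - 1) * ((n : ℝ) - 2) / 2) * Q
    / (r ^ (n - 1) * Real.sqrt (Vgraph n M Q lam f r))

/-- Scalar curvature of the induced metric: `R_f = (n-1) r^{1-n} (d/dr)[r^{n-2}(1 - V_f)]`. -/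
noncomputable def Rgraph (n : ℕ) (M Q lam : ℝ) (f : ℝ → ℝ) (r : ℝ) : ℝ :=
  ((n : ℝ) - 1) / r ^ (n - 1) * deriv (fun ρ => ρ ^ (n - 2) * (1 - Vgraph n M Q lam f ρ)) r

/-!
Along the graph, `r² k_S² / (n-1)² = (V_RN f')² V_f`, so with `u = V_RN f'` the bracket of the
charged Hawking mass is `1 - V_f (1 - u²) = 1 - V_RN`: the mass of the graph is that of the
static slice `t = const`, where it reduces to the algebraic identity defining `V_RN`.
-/

noncomputable def chargedHawkingMass (n : ℕ) (q lam V kS r : ℝ) : ℝ :=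
  r ^ (n - 2) / 2 * (1 - V + r ^ 2 * kS ^ 2 / ((n : ℝ) - 1) ^ 2)
    + lam * r ^ n / 2 + q ^ 2 / (2 * r ^ (n - 2))

theorem chargedHawkingMass_VRN {n : ℕ} (hn : 2 ≤ n) (M Q lam : ℝ) {r : ℝ} (hr : r ≠ 0) :
    chargedHawkingMass n Q lam (VRN n M Q lam r) 0 r = M := by
  have hrn : r ^ n = r ^ (n - 2) * r ^ 2 := by rw [← pow_add, Nat.sub_add_cancel hn]
  have hrn2 : r ^ (2 * (n - 2)) = r ^ (n - 2) * r ^ (n - 2) := by rw [two_mul, pow_add]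
  have hr' : r ^ (n - 2) ≠ 0 := pow_ne_zero _ hr
  rw [chargedHawkingMass, VRN, hrn, hrn2]
  field_simp
  ring

theorem Vgraph_nonneg {n : ℕ} {M Q lam : ℝ} {f : ℝ → ℝ} {r : ℝ} (hV : 0 ≤ VRN n M Q lam r)
    (hu : |VRN n M Q lam r * deriv f r| < 1) : 0 ≤ Vgraph n M Q lam f r :=
  div_nonneg hV (sub_nonneg.2 ((sq_lt_one_iff_abs_lt_one _).2 hu).le)

theorem sq_mul_sq_kSgraph_div {n : ℕ} (hn : (n : ℝ) ≠ 1) {M Q lam : ℝ} {f : ℝ → ℝ} {r : ℝ}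
    (hr : r ≠ 0) (hVf : 0 ≤ Vgraph n M Q lam f r) :
    r ^ 2 * kSgraph n M Q lam f r ^ 2 / ((n : ℝ) - 1) ^ 2
      = (VRN n M Q lam r * deriv f r) ^ 2 * Vgraph n M Q lam f r := by
  have hn1 : (n : ℝ) - 1 ≠ 0 := sub_ne_zero.2 hn
  rw [kSgraph, div_pow, neg_sq, mul_pow, sq_sqrt hVf]
  field_simp

theorem one_sub_Vgraph_add_sq_mul_Vgraph {n : ℕ} {M Q lam : ℝ} {f : ℝ → ℝ} {r : ℝ}
    (hu : |VRN n M Q lam r * deriv f r| < 1) :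
    1 - Vgraph n M Q lam f r + (VRN n M Q lam r * deriv f r) ^ 2 * Vgraph n M Q lam f r
      = 1 - VRN n M Q lam r := by
  set u := VRN n M Q lam r * deriv f r with hu_def
  have hD : 1 - u ^ 2 ≠ 0 := (sub_pos.2 ((sq_lt_one_iff_abs_lt_one _).2 hu)).ne'
  rw [Vgraph, ← hu_def]
  field_simp
  ring

theorem chargedHawkingMass_graph {n : ℕ} (hn : (n : ℝ) ≠ 1) {M Q lam : ℝ} {f : ℝ → ℝ} {r : ℝ}
    (hr : r ≠ 0) (hV : 0 ≤ VRN n M Q lam r) (hu : |VRN n M Q lam r * deriv f r| < 1) :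
    chargedHawkingMass n Q lam (Vgraph n M Q lam f r) (kSgraph n M Q lam f r) r
      = chargedHawkingMass n Q lam (VRN n M Q lam r) 0 r := by
  rw [chargedHawkingMass, sq_mul_sq_kSgraph_div hn hr (Vgraph_nonneg hV hu),
    one_sub_Vgraph_add_sq_mul_Vgraph hu, chargedHawkingMass]
  simp

theorem RN_graph_chargedHawkingMass_general (n : ℕ) (hn : 3 ≤ n) (M Q lam : ℝ)
    (s : Set ℝ) (hs : s ⊆ Set.Ioi (0 : ℝ))
    (hVRN : ∀ r ∈ s, 0 < VRN n M Q lam r)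
    (f : ℝ → ℝ)
    (hspacelike : ∀ r ∈ s, |VRN n M Q lam r * deriv f r| < 1) :
    ∀ r ∈ s,
      r ^ (n - 2) / 2 *
          (1 - Vgraph n M Q lam f r + r ^ 2 * kSgraph n M Q lam f r ^ 2 / ((n : ℝ) - 1) ^ 2)
        + lam * r ^ n / 2 + Q ^ 2 / (2 * r ^ (n - 2)) = M := by
  intro r hr
  have hr0 : r ≠ 0 := (hs hr).ne'
  have hn1 : (n : ℝ) ≠ 1 := by exact_mod_cast (by omega : n ≠ 1)
  change chargedHawkingMass n Q lam (Vgraph n M Q lam f r) (kSgraph n M Q lam f r) r = M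
  rw [chargedHawkingMass_graph hn1 hr0 (hVRN r hr).le (hspacelike r hr),
    chargedHawkingMass_VRN (by omega) M Q lam hr0]

/-- The charged Hawking mass of any spherically symmetric graph `t = f(r)` in
Reissner–Nordström(-AdS) equals the mass parameter `M`:
`(r^{n-2}/2)[1 - V_f + r² k_S²/(n-1)²] + λ r^n/2 + Q²/(2 r^{n-2}) = M`. -/
theorem RN_graph_chargedHawkingMass (n : ℕ) (hn : 3 ≤ n) (M Q lam : ℝ) (hlam : 0 ≤ lam)
    (s : Set ℝ) (hs : s ⊆ Set.Ioi (0 : ℝ))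
    (hVRN : ∀ r ∈ s, 0 < VRN n M Q lam r)
    (f : ℝ → ℝ) (hf : ∀ r ∈ s, DifferentiableAt ℝ f r)
    (hspacelike : ∀ r ∈ s, |VRN n M Q lam r * deriv f r| < 1) :
    ∀ r ∈ s,
      r ^ (n - 2) / 2 *
          (1 - Vgraph n M Q lam f r + r ^ 2 * kSgraph n M Q lam f r ^ 2 / ((n : ℝ) - 1) ^ 2)
        + lam * r ^ n / 2 + Q ^ 2 / (2 * r ^ (n - 2)) = M :=
  RN_graph_chargedHawkingMass_general n hn M Q lam s hs hVRN f hspacelike
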